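/- arXiv:1206.5383 — 6 statements merged into one kernel-verified Lean document; each statement's English description precedes it below -/
import Mathlib

section
/- For integers n ≥ 3 and 0 ≤ a < b ≤ m := n with b - a ≥ n/3 - 1 (real inequality), the closed integer interval [a, b] contains an integer of the form 2^k or of the form n - 2^k for some natural number k. -/
/-!
An interval `[x, y]` of positive integers with `2x ≤ y + 1` contains the largest power of two
not exceeding `y`. If `[a, b]` contains no power of two, then `b ≤ 2a - 2`; if it contains no
`n - 2^k`, the reflected interval `[n - b, n - a]` contains no power of two, so
`n - a ≤ 2(n - b) - 2`. Adding the two gives `3(b - a) ≤ n - 4`, against `b - a ≥ n/3 - 1`.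
-/

lemma exists_two_pow_mem_Icc {x y : ℤ} (hy : 1 ≤ y) (hxy : 2 * x ≤ y + 1) :
    ∃ k : ℕ, x ≤ 2 ^ k ∧ 2 ^ k ≤ y := by
  lift y to ℕ using by omega
  refine ⟨Nat.log 2 y, ?_, by exact_mod_cast Nat.pow_log_le_self 2 (by omega)⟩
  have hlt : (y : ℤ) < 2 ^ Nat.log 2 y * 2 := by
    exact_mod_cast pow_succ 2 (Nat.log 2 y) ▸ Nat.lt_pow_succ_log_self one_lt_two y
  linarith

theorem interval_contains_power_of_two_or_complement_general
    (n a b : ℤ) (ha : 0 ≤ a) (hab : a < b) (hb : b ≤ n)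
    (hlen : ((b : ℝ) - a) ≥ (n : ℝ) / 3 - 1) :
    ∃ (k : ℕ) (c : ℤ), a ≤ c ∧ c ≤ b ∧ (c = 2 ^ k ∨ c = n - 2 ^ k) := by
  by_cases hleft : 2 * a ≤ b + 1
  · obtain ⟨k, hak, hkb⟩ := exists_two_pow_mem_Icc (by omega) hleft
    exact ⟨k, 2 ^ k, hak, hkb, Or.inl rfl⟩
  by_cases hright : 2 * (n - b) ≤ (n - a) + 1
  · obtain ⟨k, hbk, hka⟩ := exists_two_pow_mem_Icc (by omega) hright
    exact ⟨k, n - 2 ^ k, by linarith, by linarith, Or.inr rfl⟩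
  have hshort : 3 * (b - a) ≤ n - 4 := by omega
  have hshort' : (3 * ((b : ℝ) - a)) ≤ n - 4 := by exact_mod_cast hshort
  linarith

theorem interval_contains_power_of_two_or_complement
    (n a b : ℤ) (hn : 3 ≤ n) (ha : 0 ≤ a) (hab : a < b) (hb : b ≤ n)
    (hlen : ((b : ℝ) - a) ≥ (n : ℝ) / 3 - 1) :
    ∃ (k : ℕ) (c : ℤ), a ≤ c ∧ c ≤ b ∧ (c = 2 ^ k ∨ c = n - 2 ^ k) :=
  interval_contains_power_of_two_or_complement_general n a b ha hab hb hlen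
end

section
/- Let 2 ≤ M be an odd integer and K ≥ 2 an integer with 3K ≥ M, and let 0 ≤ S < M be an integer. Then there exists an integer s with max(S,1) ≤ s < min(S + K, M) and gcd(s, M) = 1. -/
/-!
Every interval `(n, 2n]` contains a power of two, and both `2 ^ b` and `M - 2 ^ b` are coprime
to the odd number `M`. If the window `[max S 1, min (S + K) M)` reaches `M` it contains
`M - 1`, and if `S = 0` it contains `1`. Otherwise it is `[S, S + K)` with `S ≥ 1`: for `S < K`
it contains a power of two in `(S, 2S]`, and for `S ≥ K` the bound `3K ≥ M` makes it contain
`M - 2 ^ b` with `2 ^ b ∈ (M - S - K, 2 (M - S - K)]`.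
-/

theorem Int.exists_two_pow_mem_Ioc {n : ℤ} (hn : 0 < n) :
    ∃ b : ℕ, n < 2 ^ b ∧ (2 : ℤ) ^ b ≤ 2 * n := by
  lift n to ℕ using hn.le
  have hn0 : n ≠ 0 := by omega
  refine ⟨Nat.log 2 n + 1, ?_, ?_⟩
  · exact_mod_cast Nat.lt_pow_succ_log_self one_lt_two n
  · rw [pow_succ, mul_comm]
    exact_mod_cast Nat.mul_le_mul_left 2 (Nat.pow_log_le_self 2 hn0)

theorem Int.gcd_two_pow_eq_one_of_odd {M : ℤ} (hM : Odd M) (b : ℕ) : Int.gcd (2 ^ b) M = 1 :=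
  Int.isCoprime_iff_gcd_eq_one.mp ((Int.isCoprime_two_left.mpr hM).pow_left)

theorem Int.gcd_sub_two_pow_eq_one_of_odd {M : ℤ} (hM : Odd M) (b : ℕ) :
    Int.gcd (M - 2 ^ b) M = 1 := by
  rw [Int.gcd_self_sub_left, Int.gcd_two_pow_eq_one_of_odd hM]

theorem exists_coprime_in_interval
    (M K S : ℤ) (hM : 2 ≤ M) (hModd : Odd M) (hK : 2 ≤ K) (hKM : 3 * K ≥ M)
    (hS : 0 ≤ S) (hSM : S < M) :
    ∃ s : ℤ, max S 1 ≤ s ∧ s < min (S + K) M ∧ Int.gcd s M = 1 := by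
  simp only [max_le_iff, lt_min_iff]
  rcases le_or_gt M (S + K) with hMSK | hMSK
  · refine ⟨M - 2 ^ 0, ?_, ?_, Int.gcd_sub_two_pow_eq_one_of_odd hModd 0⟩ <;> omega
  rcases hS.eq_or_lt with rfl | hS
  · refine ⟨2 ^ 0, ?_, ?_, Int.gcd_two_pow_eq_one_of_odd hModd 0⟩ <;> omega
  rcases lt_or_ge S K with hSK | hKS
  · obtain ⟨b, hlo, hhi⟩ := Int.exists_two_pow_mem_Ioc hS
    exact ⟨2 ^ b, by omega, by omega, Int.gcd_two_pow_eq_one_of_odd hModd b⟩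
  · obtain ⟨b, hlo, hhi⟩ := Int.exists_two_pow_mem_Ioc (n := M - S - K) (by omega)
    exact ⟨M - 2 ^ b, by omega, by omega, Int.gcd_sub_two_pow_eq_one_of_odd hModd b⟩
end

section
/- For integers k ≥ 1, m ≥ 1, and 0 ≤ s < m, the following are equivalent: (a) there exist integers n ≥ 1 and x ≥ 0 with m = k·n, s = k·x, x < n, and n dividing x² + x + 1; (b) k = gcd(s, m) (with the convention gcd(0,m) = m) and there exists an integer b with 0 < b ≤ m/k, b·s ≡ −k (mod m), and s = b·k − k. -/
/-! Put `b = x + 1`. With `m = k n` and `s = k x`, the identity `b s + k = k (x² + x + 1)` turns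
`m ∣ b s + k` into `n ∣ x² + x + 1`, and any such `n` is coprime to `x` (as `x (x + 1) ≡ -1 mod n`),
so that `gcd(s, m) = k · gcd(x, n) = k`. Conversely `k = gcd(s, m)` divides `m`, and
`0 < b ≤ m / k` gives `0 ≤ x < n`. -/

theorem Int.isCoprime_of_dvd_sq_add_add_one {x n : ℤ} (h : n ∣ x ^ 2 + x + 1) : IsCoprime x n := by
  obtain ⟨c, hc⟩ := h
  exact ⟨-(x + 1), c, by linear_combination -hc⟩

theorem Int.gcd_mul_mul_of_dvd_sq_add_add_one {k x n : ℤ} (hk : 0 ≤ k) (h : n ∣ x ^ 2 + x + 1) :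
    ((k * x).gcd (k * n) : ℤ) = k := by
  rw [Int.gcd_mul_left, Int.isCoprime_iff_gcd_eq_one.mp (isCoprime_of_dvd_sq_add_add_one h)]
  simp [abs_of_nonneg hk]

theorem Int.mul_dvd_add_one_mul_mul_add_iff {k x n : ℤ} (hk : k ≠ 0) :
    k * n ∣ (x + 1) * (k * x) + k ↔ n ∣ x ^ 2 + x + 1 := by
  rw [show (x + 1) * (k * x) + k = k * (x ^ 2 + x + 1) by ring, mul_dvd_mul_iff_left hk]

theorem one_point_orbit_arith_characterization_general
    (k m s : ℤ) (hk : 1 ≤ k) :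
    (∃ n x : ℤ, 1 ≤ n ∧ 0 ≤ x ∧ m = k * n ∧ s = k * x ∧ x < n ∧ n ∣ x ^ 2 + x + 1)
      ↔
    (k = (Int.gcd s m : ℤ) ∧
      ∃ b : ℤ, 0 < b ∧ b ≤ m / k ∧ m ∣ b * s + k ∧ s = b * k - k) := by
  constructor
  · rintro ⟨n, x, -, hx, rfl, rfl, hxn, hdvd⟩
    refine ⟨(Int.gcd_mul_mul_of_dvd_sq_add_add_one (by omega) hdvd).symm, x + 1, by omega, ?_,
      (Int.mul_dvd_add_one_mul_mul_add_iff (by omega)).mpr hdvd, by ring⟩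
    rw [Int.mul_ediv_cancel_left _ (by omega)]
    omega
  · rintro ⟨hgcd, b, hb0, hbn, hdvd, rfl⟩
    obtain ⟨n, rfl⟩ : k ∣ m := hgcd ▸ Int.gcd_dvd_right _ _
    rw [Int.mul_ediv_cancel_left _ (by omega)] at hbn
    refine ⟨n, b - 1, by omega, by omega, rfl, by ring, by omega, ?_⟩
    rw [← Int.mul_dvd_add_one_mul_mul_add_iff (k := k) (by omega)]
    convert hdvd using 1
    ring

theorem one_point_orbit_arith_characterization
    (k m s : ℤ) (hk : 1 ≤ k) (hm : 1 ≤ m) (hs : 0 ≤ s) (hsm : s < m) :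
    (∃ n x : ℤ, 1 ≤ n ∧ 0 ≤ x ∧ m = k * n ∧ s = k * x ∧ x < n ∧ n ∣ x ^ 2 + x + 1)
      ↔
    (k = (Int.gcd s m : ℤ) ∧
      ∃ b : ℤ, 0 < b ∧ b ≤ m / k ∧ m ∣ b * s + k ∧ s = b * k - k) :=
  one_point_orbit_arith_characterization_general k m s hk
end

section
/- The set of pairs of positive integers (x, y) satisfying x² + x + 1 = 3·y² is infinite. -/
/-!
Writing `u = 2x + 1`, the equation becomes `u² - 12y² = -3`. Multiplication by the unit
`7 + 2√12` of `ℤ[√12]` preserves the norm `u² - 12y²`; in the coordinates `(x, y)` it is the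
affine map `step` below. Iterating it from the solution `(1, 1)` gives positive solutions with
strictly increasing `x`.
-/

namespace SchinzelSierpinski

def step (p : ℤ × ℤ) : ℤ × ℤ := (7 * p.1 + 12 * p.2 + 3, 4 * p.1 + 7 * p.2 + 2)

lemma step_sq_add_self_add_one {p : ℤ × ℤ} (h : p.1 ^ 2 + p.1 + 1 = 3 * p.2 ^ 2) :
    (step p).1 ^ 2 + (step p).1 + 1 = 3 * (step p).2 ^ 2 := by
  simp only [step]
  linear_combination h

lemma fst_lt_step_fst {p : ℤ × ℤ} (h₁ : 0 ≤ p.1) (h₂ : 0 ≤ p.2) : p.1 < (step p).1 := by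
  simp only [step]
  linarith

lemma snd_lt_step_snd {p : ℤ × ℤ} (h₁ : 0 ≤ p.1) (h₂ : 0 ≤ p.2) : p.2 < (step p).2 := by
  simp only [step]
  linarith

end SchinzelSierpinski

open SchinzelSierpinski in
theorem infinite_solutions_schinzel_sierpinski :
    {p : ℤ × ℤ | 0 < p.1 ∧ 0 < p.2 ∧ p.1 ^ 2 + p.1 + 1 = 3 * p.2 ^ 2}.Infinite := by
  set S := {p : ℤ × ℤ | 0 < p.1 ∧ 0 < p.2 ∧ p.1 ^ 2 + p.1 + 1 = 3 * p.2 ^ 2}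
  have hmaps : Set.MapsTo step S S := fun p ⟨h₁, h₂, h⟩ =>
    ⟨h₁.trans (fst_lt_step_fst h₁.le h₂.le), h₂.trans (snd_lt_step_snd h₁.le h₂.le),
      step_sq_add_self_add_one h⟩
  have horbit (n : ℕ) : step^[n] (1, 1) ∈ S := hmaps.iterate n (by norm_num [S])
  have hmono : StrictMono (Prod.fst ∘ fun n => step^[n] (1, 1)) := by
    refine strictMono_nat_of_lt_succ fun n => ?_
    simp only [Function.comp_apply, Function.iterate_succ_apply']
    exact fst_lt_step_fst (horbit n).1.le (horbit n).2.1.le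
  exact Set.infinite_of_injective_forall_mem hmono.injective.of_comp horbit
end

section
/- Let f'_3, f'_4, f'_5, f'_6, f''_3, f''_4, f''_5, f''_6 be nonnegative integers (counts of vertices of each degree in the two end-trees) satisfying the Tutte identity Σ_{i=3}^{6} (i−2)·f'_i = Σ_{i=3}^{6} (i−2)·f''_i and the Euler identity Σ_{i=3}^{5} (6−i)·(f'_i + f''_i) = 12. Then |Σ_{i=3}^{6} f''_i − Σ_{i=3}^{6} f'_i| ≤ 3. -/
/-!
Subtracting the Tutte identity from four times the difference of the orders turns that
difference into `(1/4) Σ_{i=3}^{5} (6 - i) (f''_i - f'_i)`. Both weighted sums are nonnegative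
and, by the Euler identity, add up to `12`, so they differ by at most `12`.
-/

theorem four_mul_sub_eq_of_tutte {R : Type*} [CommRing R]
    (f3' f4' f5' f6' f3'' f4'' f5'' f6'' : R)
    (hTutte : 1 * f3' + 2 * f4' + 3 * f5' + 4 * f6'
            = 1 * f3'' + 2 * f4'' + 3 * f5'' + 4 * f6'') :
    4 * ((f3'' + f4'' + f5'' + f6'') - (f3' + f4' + f5' + f6'))
      = (3 * f3'' + 2 * f4'' + 1 * f5'') - (3 * f3' + 2 * f4' + 1 * f5') := by
  linear_combination -hTutte

theorem end_trees_orders_differ_by_at_most_three_general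
    (f3' f4' f5' f6' f3'' f4'' f5'' f6'' : ℤ)
    (h3' : 0 ≤ f3') (h4' : 0 ≤ f4') (h5' : 0 ≤ f5')
    (h3'' : 0 ≤ f3'') (h4'' : 0 ≤ f4'') (h5'' : 0 ≤ f5'')
    (hTutte : 1 * f3' + 2 * f4' + 3 * f5' + 4 * f6'
            = 1 * f3'' + 2 * f4'' + 3 * f5'' + 4 * f6'')
    (hEuler : 3 * (f3' + f3'') + 2 * (f4' + f4'') + 1 * (f5' + f5'') = 12) :
    |(f3'' + f4'' + f5'' + f6'') - (f3' + f4' + f5' + f6')| ≤ 3 := by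
  have hweighted := four_mul_sub_eq_of_tutte _ _ _ _ _ _ _ _ hTutte
  have hbound : |(3 * f3'' + 2 * f4'' + 1 * f5'') - (3 * f3' + 2 * f4' + 1 * f5')| ≤ 12 :=
    abs_sub_le_of_nonneg_of_le (by positivity) (by linarith) (by positivity) (by linarith)
  rw [abs_le] at hbound ⊢
  omega

theorem end_trees_orders_differ_by_at_most_three
    (f3' f4' f5' f6' f3'' f4'' f5'' f6'' : ℤ)
    (h3' : 0 ≤ f3') (h4' : 0 ≤ f4') (h5' : 0 ≤ f5') (h6' : 0 ≤ f6')
    (h3'' : 0 ≤ f3'') (h4'' : 0 ≤ f4'') (h5'' : 0 ≤ f5'') (h6'' : 0 ≤ f6'')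
    (hTutte : 1 * f3' + 2 * f4' + 3 * f5' + 4 * f6'
            = 1 * f3'' + 2 * f4'' + 3 * f5'' + 4 * f6'')
    (hEuler : 3 * (f3' + f3'') + 2 * (f4' + f4'') + 1 * (f5' + f5'') = 12) :
    |(f3'' + f4'' + f5'' + f6'') - (f3' + f4' + f5' + f6')| ≤ 3 :=
  end_trees_orders_differ_by_at_most_three_general f3' f4' f5' f6' f3'' f4'' f5'' f6'' h3' h4' h5'
    h3'' h4'' h5'' hTutte hEuler
end

section
/- Let 0 ≤ s < m be integers with m ≥ 1, let d = gcd(s, m) (with gcd(0, m) = m), and suppose a, b are positive integers with a·m − b·s = d and b ≤ m/d. If s' = s/d', m' = m/d' where d' = gcd(s,m) puts s/m in lowest terms, then s'/m' < a/b are consecutive fractions in the Farey sequence of order m'. -/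
/-- A rational `q` belongs to the Farey sequence of order `n`:
it lies in `[0,1]` and has denominator at most `n`. -/
def InFarey (n : ℕ) (q : ℚ) : Prop := 0 ≤ q ∧ q ≤ 1 ∧ q.den ≤ n

/-- `p` and `q` are consecutive fractions (neighbors) in the Farey sequence of
order `n`: both belong to it, `p < q`, and no member lies strictly between. -/
def FareyNeighbors (n : ℕ) (p q : ℚ) : Prop :=
  InFarey n p ∧ InFarey n q ∧ p < q ∧ ∀ r : ℚ, InFarey n r → ¬(p < r ∧ r < q)

lemma Rat.den_intCast_div_le {p q : ℤ} (hq : 0 < q) : (((p : ℚ) / q).den : ℤ) ≤ q := by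
  have hdvd := Rat.den_dvd p q
  rw [Rat.divInt_eq_div] at hdvd
  exact Int.le_of_dvd hq hdvd

lemma Rat.mul_den_lt_num_mul_of_div_lt {p q : ℤ} (hq : 0 < q) {r : ℚ} (h : (p : ℚ) / q < r) :
    p * r.den < r.num * q := by
  rw [← Rat.num_div_den r, div_lt_div_iff₀ (by exact_mod_cast hq) (by exact_mod_cast r.pos)] at h
  exact_mod_cast h

lemma Rat.num_mul_lt_mul_den_of_lt_div {p q : ℤ} (hq : 0 < q) {r : ℚ} (h : r < (p : ℚ) / q) :
    r.num * q < p * r.den := by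
  rw [← Rat.num_div_den r, div_lt_div_iff₀ (by exact_mod_cast r.pos) (by exact_mod_cast hq)] at h
  exact_mod_cast h

/-- Mediant bound: with `x = r.num`, `y = r.den`, the identity
`y = q (a y - b x) + b (x q - p y)` has both brackets `≥ 1`. -/
lemma add_le_den_of_between {p q a b : ℤ} (hq : 0 < q) (hb : 0 < b) (h : a * q - b * p = 1)
    {r : ℚ} (hpr : (p : ℚ) / q < r) (hra : r < (a : ℚ) / b) : q + b ≤ r.den := by
  have hleft := Rat.mul_den_lt_num_mul_of_div_lt hq hpr
  have hright := Rat.num_mul_lt_mul_den_of_lt_div hb hra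
  have hden : (r.den : ℤ) = q * (a * r.den - b * r.num) + b * (r.num * q - p * r.den) := by
    linear_combination -(r.den : ℤ) * h
  nlinarith

lemma fareyNeighbors_of_mul_sub_mul_eq_one {n : ℕ} {p q a b : ℤ} (hp : 0 ≤ p) (hpq : p < q)
    (hb : 0 < b) (hqn : q ≤ n) (hbn : b ≤ n) (hn : n < q + b) (h : a * q - b * p = 1) :
    FareyNeighbors n ((p : ℚ) / q) ((a : ℚ) / b) := by
  have hq : 0 < q := by omega
  have ha : 0 < a := by nlinarith
  have hab : a ≤ b := by nlinarith
  have hlt : (p : ℚ) / q < a / b := by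
    rw [div_lt_div_iff₀ (by exact_mod_cast hq) (by exact_mod_cast hb)]
    exact_mod_cast (by linarith : p * b < a * q)
  refine ⟨⟨by positivity, ?_, ?_⟩, ⟨by positivity, ?_, ?_⟩, hlt, ?_⟩
  · rw [div_le_one (by exact_mod_cast hq)]; exact_mod_cast hpq.le
  · have := Rat.den_intCast_div_le (p := p) hq; omega
  · rw [div_le_one (by exact_mod_cast hb)]; exact_mod_cast hab
  · have := Rat.den_intCast_div_le (p := a) hb; omega
  · rintro r ⟨-, -, hr⟩ ⟨hpr, hra⟩
    have := add_le_den_of_between hq hb h hpr hra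
    omega

theorem farey_neighbors_of_gcd_relation_general
    (s m a b : ℤ) (hs : 0 ≤ s) (hsm : s < m)
    (hb : 0 < b)
    (hd : a * m - b * s = (Int.gcd s m : ℤ))
    (hbm : b ≤ m / (Int.gcd s m : ℤ)) :
    FareyNeighbors (m / (Int.gcd s m : ℤ)).toNat
      ((s : ℚ) / (m : ℚ)) ((a : ℚ) / (b : ℚ)) := by
  set d : ℤ := (Int.gcd s m : ℤ)
  have hd0 : 0 < d := Int.natCast_pos.mpr (Int.gcd_pos_of_ne_zero_right s (by omega))
  obtain ⟨s', hs'⟩ : d ∣ s := Int.gcd_dvd_left s m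
  obtain ⟨m', hm'⟩ : d ∣ m := Int.gcd_dvd_right s m
  have hmd : m / d = m' := by rw [hm']; exact Int.mul_ediv_cancel_left _ hd0.ne'
  have hreduced : a * m' - b * s' = 1 := by
    rw [hs', hm'] at hd
    exact mul_left_cancel₀ hd0.ne' (by linear_combination hd)
  have hfrac : (s : ℚ) / m = s' / m' := by
    rw [hs', hm']; push_cast; exact mul_div_mul_left _ _ (by exact_mod_cast hd0.ne')
  rw [hmd] at hbm
  rw [hmd, hfrac]
  have hm'n : (m'.toNat : ℤ) = m' := Int.toNat_of_nonneg (by nlinarith)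
  exact fareyNeighbors_of_mul_sub_mul_eq_one (by nlinarith) (by nlinarith) hb hm'n.ge
    (hm'n ▸ hbm) (by omega) hreduced

theorem farey_neighbors_of_gcd_relation
    (s m a b : ℤ) (hm : 1 ≤ m) (hs : 0 ≤ s) (hsm : s < m)
    (ha : 0 < a) (hb : 0 < b)
    (hd : a * m - b * s = (Int.gcd s m : ℤ))
    (hbm : b ≤ m / (Int.gcd s m : ℤ)) :
    FareyNeighbors (m / (Int.gcd s m : ℤ)).toNat
      ((s : ℚ) / (m : ℚ)) ((a : ℚ) / (b : ℚ)) :=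
  farey_neighbors_of_gcd_relation_general s m a b hs hsm hb hd hbm
end
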